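/- arXiv:2507.13792 — 3 statements merged into one kernel-verified Lean document; each statement's English description precedes it below -/
import Mathlib

section
/- Let G be an acyclic grade graph and let n be the cardinality of Nodes(G). Then every path p with length(p) ≥ n + 1 satisfies w_G(p) = 0. -/
open scoped Classical

/-- Weight of a path (nonempty list of vertices) in a grade graph. -/
def pathWeight {V R : Type*} [Semiring R] (G : V → V → R) : List V → R
  | [] => 1
  | [_] => 1
  | x :: y :: p => G x y * pathWeight G (y :: p)

/-- The set of non-source nodes of a grade graph. -/
def Nodes {V R : Type*} [Zero R] (G : V → V → R) : Set V := {y | ∃ x, G x y ≠ 0}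

/-- Paths from `x` to `y`: nonempty lists with head `x` and last element `y`. -/
def PathsBtw {V : Type*} (x y : V) : Set (List V) :=
  {p | p ≠ [] ∧ p.head? = some x ∧ p.getLast? = some y}

/-- A cycle: a path with more than one node and equal endpoints. -/
def IsCyclePath {V : Type*} (p : List V) : Prop := 1 < p.length ∧ p.head? = p.getLast?

/-- A grade graph is acyclic if every cycle has weight zero. -/
def Acyclic {V R : Type*} [Semiring R] (G : V → V → R) : Prop :=
  ∀ p : List V, IsCyclePath p → pathWeight G p = 0

/-- Reflexive and transitive closure of a grade graph:
`G*(x,y) = Σ_{p ∈ Paths(x,y)} w_G(p)`. -/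
noncomputable def gstar {V R : Type*} [Semiring R] (G : V → V → R) (x y : V) : R :=
  ∑ᶠ p ∈ PathsBtw x y, pathWeight G p

/-- Grade matrix multiplication. -/
noncomputable def matMul {V R : Type*} [Semiring R] (M₁ M₂ : V → V → R) (x y : V) : R :=
  ∑ᶠ z, M₁ x z * M₂ z y

/-- Identity grade matrix. -/
noncomputable def matId {V R : Type*} [Semiring R] (x y : V) : R := if x = y then 1 else 0

/-- `n`-fold product of a grade graph with itself, with `G⁰ = I`. -/
noncomputable def matPow {V R : Type*} [Semiring R] (G : V → V → R) : ℕ → V → V → R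
  | 0 => matId
  | n + 1 => matMul G (matPow G n)

/-- Multiplication of a grade context by a grade matrix:
`(γ·M)(x) = Σ_y γ(y)·M(y,x)`. -/
noncomputable def ctxMul {V R : Type*} [Semiring R] (γ : V → R) (M : V → V → R) (x : V) : R :=
  ∑ᶠ y, γ y * M y x

/-- A grade matrix: every row has finite support. -/
def RowFinite {V R : Type*} [Zero R] (M : V → V → R) : Prop :=
  ∀ x, {y | M x y ≠ 0}.Finite


/-!
A nonzero-weight path `x :: t` has every vertex of `t` in `Nodes G`, since each of them is the
target of an edge of nonzero weight. If `t` has more vertices than `Nodes G`, pigeonhole yields a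
repeated vertex, so the path factors through a cycle, whose weight is zero by acyclicity.
-/

theorem List.exists_eq_append_cons_append_cons_of_not_nodup {α : Type*} {l : List α}
    (hl : ¬ l.Nodup) : ∃ x a b c, l = a ++ x :: (b ++ x :: c) := by
  obtain ⟨x, hxx⟩ : ∃ x, [x, x].Sublist l := by simpa [List.nodup_iff_sublist] using hl
  obtain ⟨r₁, r₂, rfl, hx₁, hx₂⟩ := List.cons_sublist_iff.mp hxx
  obtain ⟨a, b, rfl⟩ := List.append_of_mem hx₁
  obtain ⟨s, c, rfl⟩ := List.append_of_mem (List.singleton_sublist.mp hx₂)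
  exact ⟨x, a, b ++ s, c, by simp⟩

theorem List.Nodup.length_le_ncard {α : Type*} {l : List α} {s : Set α} (hl : l.Nodup)
    (hls : ∀ y ∈ l, y ∈ s) (hs : s.Finite) : l.length ≤ s.ncard :=
  calc l.length = l.toFinset.card := (List.toFinset_card_of_nodup hl).symm
    _ = (l.toFinset : Set α).ncard := (Set.ncard_coe_finset _).symm
    _ ≤ s.ncard := Set.ncard_le_ncard (fun y hy => hls y (by simpa using hy)) hs

section GradeGraph

variable {V R : Type*}

theorem finite_nodes [Zero R] {G : V → V → R} (hG : {q : V × V | G q.1 q.2 ≠ 0}.Finite) :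
    (Nodes G).Finite :=
  (hG.image Prod.snd).subset fun y ⟨x, hxy⟩ => ⟨(x, y), hxy, rfl⟩

variable [Semiring R] (G : V → V → R)

theorem pathWeight_append_cons :
    ∀ (a : List V) (m : V) (b : List V),
      pathWeight G (a ++ m :: b) = pathWeight G (a ++ [m]) * pathWeight G (m :: b)
  | [], _, _ => by simp [pathWeight]
  | [_], _, _ => by simp [pathWeight]
  | x :: y :: a, m, b => by
    simp only [List.cons_append, pathWeight]
    rw [← List.cons_append, pathWeight_append_cons (y :: a) m b, List.cons_append, mul_assoc]

theorem isCyclePath_cons_append_singleton (x : V) (b : List V) : IsCyclePath (x :: b ++ [x]) :=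
  ⟨by simp, by rw [List.getLast?_concat]; rfl⟩

variable {G}

theorem mem_nodes_of_pathWeight_ne_zero {x y : V} {t : List V}
    (hw : pathWeight G (x :: t) ≠ 0) (hy : y ∈ t) : y ∈ Nodes G := by
  induction t generalizing x with
  | nil => simp at hy
  | cons z t ih =>
    rw [pathWeight] at hw
    rcases List.mem_cons.mp hy with rfl | hy
    · exact ⟨x, left_ne_zero_of_mul hw⟩
    · exact ih (right_ne_zero_of_mul hw) hy

theorem Acyclic.pathWeight_eq_zero_of_not_nodup (hG : Acyclic G) {p : List V}
    (hp : ¬ p.Nodup) : pathWeight G p = 0 := by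
  obtain ⟨x, a, b, c, rfl⟩ := List.exists_eq_append_cons_append_cons_of_not_nodup hp
  have hcycle : pathWeight G (x :: b ++ [x]) = 0 := hG _ (isCyclePath_cons_append_singleton x b)
  rw [pathWeight_append_cons G a, ← List.cons_append, pathWeight_append_cons G (x :: b), hcycle,
    zero_mul, mul_zero]

end GradeGraph

theorem pathWeight_eq_zero_of_long_general {V R : Type*} [Semiring R]
    (G : V → V → R) (hG : {q : V × V | G q.1 q.2 ≠ 0}.Finite)
    (hacyc : Acyclic G)
    (p : List V) (hlen : (Nodes G).ncard + 1 ≤ p.length - 1) :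
    pathWeight G p = 0 := by
  rcases p with _ | ⟨x, t⟩
  · simp at hlen
  by_contra hw
  have htail : ¬ t.Nodup := fun hnd => by
    have := hnd.length_le_ncard (fun y hy => mem_nodes_of_pathWeight_ne_zero hw hy)
      (finite_nodes hG)
    simp only [List.length_cons, Nat.add_sub_cancel] at hlen
    omega
  exact hw (hacyc.pathWeight_eq_zero_of_not_nodup fun hnd => htail hnd.of_cons)

/-- In an acyclic grade graph `G` with `n = |Nodes(G)|`, every path of length at
least `n + 1` (recall `length(p)` counts edges, i.e., is one less than the number
of nodes) has weight `0`. -/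
theorem pathWeight_eq_zero_of_long {V R : Type*} [Semiring R] [PartialOrder R]
    (hadd : ∀ a b c d : R, a ≤ b → c ≤ d → a + c ≤ b + d)
    (hmul : ∀ a b c d : R, a ≤ b → c ≤ d → a * c ≤ b * d)
    (hzero : ∀ r : R, r ≤ 0 → r = 0)
    (G : V → V → R) (hG : {q : V × V | G q.1 q.2 ≠ 0}.Finite)
    (hacyc : Acyclic G)
    (p : List V) (hp : p ≠ []) (hlen : (Nodes G).ncard + 1 ≤ p.length - 1) :
    pathWeight G p = 0 :=
  pathWeight_eq_zero_of_long_general G hG hacyc p hlen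
end

section
/- Let G be an acyclic grade graph. Then for every x ∈ V, (G·G*)(x,x) = Σ_{y ∈ V} G(x,y)·G*(y,x) = 0. -/
open scoped Classical

/-! Prepending `x` to a path `p` from `y` to `x` gives a cycle of weight `G(x,y)·w_G(p)`, which
vanishes by acyclicity; so `G(x,y)` annihilates every addend of `G*(y,x)`. -/

theorem mul_finsum_mem_eq_zero {α R : Type*} [NonUnitalNonAssocSemiring R] {s : Set α}
    {f : α → R} {r : R} (h : ∀ a ∈ s, r * f a = 0) : r * ∑ᶠ a ∈ s, f a = 0 := by
  by_cases hfin : (s ∩ Function.support f).Finite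
  · rw [← finsum_mem_inter_support, mul_finsum_mem' f r hfin]
    exact finsum_mem_of_eqOn_zero fun a ha => h a ha.1
  · rw [finsum_mem_eq_zero_of_infinite hfin, mul_zero]

theorem Acyclic.mul_pathWeight_eq_zero {V R : Type*} [Semiring R] {G : V → V → R}
    (hacyc : Acyclic G) {x y : V} {p : List V} (hp : p ∈ PathsBtw y x) :
    G x y * pathWeight G p = 0 := by
  obtain ⟨hne, hhead, hlast⟩ := hp
  obtain ⟨q, rfl⟩ : ∃ q, p = y :: q := by
    cases p with
    | nil => exact absurd rfl hne
    | cons z q => exact ⟨q, by simpa using hhead⟩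
  refine hacyc (x :: y :: q) ⟨by simp, ?_⟩
  rw [List.getLast?_cons_cons, hlast, List.head?_cons]

theorem Acyclic.mul_gstar_eq_zero {V R : Type*} [Semiring R] {G : V → V → R}
    (hacyc : Acyclic G) (x y : V) : G x y * gstar G y x = 0 :=
  mul_finsum_mem_eq_zero fun _ hp => hacyc.mul_pathWeight_eq_zero hp

theorem mul_gstar_diag_eq_zero_general {V R : Type*} [Semiring R]
    (G : V → V → R)
    (hacyc : Acyclic G) :
    ∀ x : V, matMul G (gstar G) x x = ∑ᶠ y, G x y * gstar G y x ∧
      matMul G (gstar G) x x = 0 :=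
  fun x => ⟨rfl, by simp only [matMul, hacyc.mul_gstar_eq_zero, finsum_zero]⟩

/-- For an acyclic grade graph `G`,
`(G·G*)(x,x) = Σ_y G(x,y)·G*(y,x) = 0` for every `x`. -/
theorem mul_gstar_diag_eq_zero {V R : Type*} [Semiring R] [PartialOrder R]
    (hadd : ∀ a b c d : R, a ≤ b → c ≤ d → a + c ≤ b + d)
    (hmul : ∀ a b c d : R, a ≤ b → c ≤ d → a * c ≤ b * d)
    (hzero : ∀ r : R, r ≤ 0 → r = 0)
    (G : V → V → R) (hG : {q : V × V | G q.1 q.2 ≠ 0}.Finite)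
    (hacyc : Acyclic G) :
    ∀ x : V, matMul G (gstar G) x x = ∑ᶠ y, G x y * gstar G y x ∧
      matMul G (gstar G) x x = 0 :=
  mul_gstar_diag_eq_zero_general G hacyc
end

section
/- Let G be a grade graph and let γ₁, γ₂ be grade contexts with γ₁ + γ₂·G ≤ γ₂ (pointwise). Then for every k ∈ ℕ: γ₁·(Σ_{i=0}^{k} Gⁱ) + γ₂·G^{k+1} ≤ γ₂ (pointwise). -/
open scoped Classical

/-! Induction on `k`: since `γ₂·G^{k+2} = (γ₂·G)·G^{k+1}`, the two new terms of step `k + 1`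
combine into `(γ₁ + γ₂·G)·G^{k+1} ≤ γ₂·G^{k+1}`, which is the last term of step `k`. -/

section GradeContext

variable {V R : Type*} [Semiring R]

theorem matPow_one (G : V → V → R) : matPow G 1 = G := by
  funext x y
  rw [matPow, matPow, matMul, finsum_eq_single _ y fun z hz => by simp [matId, hz]]
  simp [matId]

theorem ctxMul_matId (γ : V → R) (x : V) : ctxMul γ matId x = γ x := by
  rw [ctxMul, finsum_eq_single _ x fun y hy => by simp [matId, hy]]
  simp [matId]

theorem ctxMul_eq_finsetSum {γ : V → R} (hγ : {x | γ x ≠ 0}.Finite) (M : V → V → R) (x : V) :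
    ctxMul γ M x = ∑ y ∈ hγ.toFinset, γ y * M y x :=
  finsum_eq_sum_of_support_subset _ fun y hy => by
    simpa using left_ne_zero_of_mul (Function.mem_support.1 hy)

theorem ctxMul_support_finite {γ : V → R} (hγ : {x | γ x ≠ 0}.Finite) {M : V → V → R}
    (hM : RowFinite M) : {x | ctxMul γ M x ≠ 0}.Finite := by
  unfold RowFinite at hM
  refine (hγ.biUnion fun y _ => hM y).subset fun x hx => ?_
  rw [Set.mem_ofPred_eq, ctxMul_eq_finsetSum hγ] at hx
  obtain ⟨y, hy, hyx⟩ := Finset.exists_ne_zero_of_sum_ne_zero hx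
  exact Set.mem_biUnion (hγ.mem_toFinset.1 hy) (right_ne_zero_of_mul hyx)

theorem ctxMul_add_left {γ γ' : V → R} (hγ : {x | γ x ≠ 0}.Finite)
    (hγ' : {x | γ' x ≠ 0}.Finite) (M : V → V → R) (x : V) :
    ctxMul (fun y => γ y + γ' y) M x = ctxMul γ M x + ctxMul γ' M x := by
  simp only [ctxMul, add_mul]
  exact finsum_add_distrib (hγ.subset (Function.support_mul_subset_left _ _))
    (hγ'.subset (Function.support_mul_subset_left _ _))

theorem ctxMul_add_right {γ : V → R} (hγ : {x | γ x ≠ 0}.Finite) (M N : V → V → R) (x : V) :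
    ctxMul γ (fun a b => M a b + N a b) x = ctxMul γ M x + ctxMul γ N x := by
  simp only [ctxMul_eq_finsetSum hγ, mul_add, Finset.sum_add_distrib]

theorem ctxMul_matMul {γ : V → R} (hγ : {x | γ x ≠ 0}.Finite) {G : V → V → R}
    (hG : RowFinite G) (M : V → V → R) (x : V) :
    ctxMul γ (matMul G M) x = ctxMul (ctxMul γ G) M x := by
  unfold RowFinite at hG
  calc
    ctxMul γ (matMul G M) x = ∑ y ∈ hγ.toFinset, ∑ᶠ z, γ y * (G y z * M z x) := by
      rw [ctxMul_eq_finsetSum hγ]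
      exact Finset.sum_congr rfl fun y _ => mul_finsum' (fun z => G y z * M z x) (γ y)
        ((hG y).subset (Function.support_mul_subset_left _ _))
    _ = ∑ᶠ z, ∑ y ∈ hγ.toFinset, γ y * G y z * M z x := by
      simp only [mul_assoc]
      exact sum_finsum_comm _ _ fun y _ =>
        (hG y).subset fun z hz => left_ne_zero_of_mul (right_ne_zero_of_mul hz)
    _ = ∑ᶠ z, ctxMul γ G z * M z x := by
      simp only [ctxMul_eq_finsetSum hγ G, Finset.sum_mul]

theorem ctxMul_mono [PartialOrder R] [AddLeftMono R] [MulRightMono R] {γ γ' : V → R}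
    (hγ : {x | γ x ≠ 0}.Finite) (hγ' : {x | γ' x ≠ 0}.Finite) (hle : γ ≤ γ')
    (M : V → V → R) (x : V) : ctxMul γ M x ≤ ctxMul γ' M x :=
  finsum_le_finsum' (hγ.subset (Function.support_mul_subset_left _ _))
    (hγ'.subset (Function.support_mul_subset_left _ _)) fun y => mul_left_mono (hle y)

end GradeContext

theorem ctx_sum_pows_le_general {V R : Type*} [Semiring R] [PartialOrder R]
    (hadd : ∀ a b c d : R, a ≤ b → c ≤ d → a + c ≤ b + d)
    (hmul : ∀ a b c d : R, a ≤ b → c ≤ d → a * c ≤ b * d)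
    (G : V → V → R) (hG : {q : V × V | G q.1 q.2 ≠ 0}.Finite)
    (γ₁ γ₂ : V → R) (hγ₁ : {x | γ₁ x ≠ 0}.Finite) (hγ₂ : {x | γ₂ x ≠ 0}.Finite)
    (h : ∀ x, γ₁ x + ctxMul γ₂ G x ≤ γ₂ x) :
    ∀ (k : ℕ) (x : V),
      ctxMul γ₁ (fun a b => ∑ i ∈ Finset.range (k + 1), matPow G i a b) x +
        ctxMul γ₂ (matPow G (k + 1)) x ≤ γ₂ x := by
  have : AddLeftMono R := ⟨fun _ _ _ hle => hadd _ _ _ _ le_rfl hle⟩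
  have : MulRightMono R := ⟨fun _ _ _ hle => hmul _ _ _ _ hle le_rfl⟩
  have hGrow : RowFinite G := fun x => hG.preimage (Prod.mk_right_injective x).injOn
  have hγ₂G := ctxMul_support_finite hγ₂ hGrow
  have hlhs : {x | γ₁ x + ctxMul γ₂ G x ≠ 0}.Finite :=
    (hγ₁.union hγ₂G).subset (Function.support_add γ₁ (ctxMul γ₂ G))
  intro k
  induction k with
  | zero =>
    simpa only [zero_add, Finset.sum_range_one, matPow.eq_1, ctxMul_matId, matPow_one] using h
  | succ k ih =>
    intro x
    calc
      _ = ctxMul γ₁ (fun a b => ∑ i ∈ Finset.range (k + 1), matPow G i a b) x +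
            ctxMul (fun y => γ₁ y + ctxMul γ₂ G y) (matPow G (k + 1)) x := by
        simp only [Finset.sum_range_succ _ (k + 1), ctxMul_add_right hγ₁, matPow.eq_2 G (k + 1),
          ctxMul_matMul hγ₂ hGrow, ctxMul_add_left hγ₁ hγ₂G]
        rw [add_assoc]
      _ ≤ _ := by
        gcongr
        exact ctxMul_mono hlhs hγ₂ h _ x
      _ ≤ γ₂ x := ih x

/-- For a grade graph `G` and grade contexts `γ₁, γ₂` with `γ₁ + γ₂·G ≤ γ₂`
pointwise: for every `k`, `γ₁·(Σ_{i=0}^{k} Gⁱ) + γ₂·G^{k+1} ≤ γ₂` pointwise. -/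
theorem ctx_sum_pows_le {V R : Type*} [Semiring R] [PartialOrder R]
    (hadd : ∀ a b c d : R, a ≤ b → c ≤ d → a + c ≤ b + d)
    (hmul : ∀ a b c d : R, a ≤ b → c ≤ d → a * c ≤ b * d)
    (hzero : ∀ r : R, r ≤ 0 → r = 0)
    (G : V → V → R) (hG : {q : V × V | G q.1 q.2 ≠ 0}.Finite)
    (γ₁ γ₂ : V → R) (hγ₁ : {x | γ₁ x ≠ 0}.Finite) (hγ₂ : {x | γ₂ x ≠ 0}.Finite)
    (h : ∀ x, γ₁ x + ctxMul γ₂ G x ≤ γ₂ x) :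
    ∀ (k : ℕ) (x : V),
      ctxMul γ₁ (fun a b => ∑ i ∈ Finset.range (k + 1), matPow G i a b) x +
        ctxMul γ₂ (matPow G (k + 1)) x ≤ γ₂ x :=
  ctx_sum_pows_le_general hadd hmul G hG γ₁ γ₂ hγ₁ hγ₂ h
end
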